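/- arXiv:2103.00750 — 2 statements merged into one kernel-verified Lean document; each statement's English description precedes it below -/
import Mathlib

section
/- Projection onto the PSD cone via eigenvalue clipping: if P = R diag(λ) Rᵀ with R orthogonal, then P⁺ := R diag(max(0, λ)) Rᵀ minimizes the Frobenius distance ‖P − X‖_F over all symmetric positive semidefinite matrices X. -/
/-! Conjugating by the orthogonal `R` preserves the sum of squared entries and turns `P` into
`diagonal l`, `P⁺` into `diagonal (max 0 ∘ l)` and a PSD `X` into a PSD `Y`. Off-diagonal entries
of `diagonal l - Y` only add to the distance, and on the diagonal `Y i i ≥ 0` gives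
`(l i - Y i i)² ≥ (l i - max 0 (l i))²`. -/

open Matrix

namespace Matrix

variable {n : Type*} [Fintype n]

theorem sum_sq_eq_trace_transpose_mul_self (A : Matrix n n ℝ) :
    ∑ i, ∑ j, A i j ^ 2 = (Aᵀ * A).trace := by
  rw [Finset.sum_comm]
  simp [trace, mul_apply, sq]

theorem sum_sq_diag_le_sum_sq (A : Matrix n n ℝ) :
    ∑ i, A i i ^ 2 ≤ ∑ i, ∑ j, A i j ^ 2 :=
  Finset.sum_le_sum fun i _ ↦
    Finset.single_le_sum (f := fun j ↦ A i j ^ 2) (fun _ _ ↦ sq_nonneg _) (Finset.mem_univ i)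

variable [DecidableEq n]

theorem sum_sq_transpose_mul_mul_of_orthogonal {R : Matrix n n ℝ} (hR : Rᵀ * R = 1)
    (A : Matrix n n ℝ) :
    ∑ i, ∑ j, (Rᵀ * A * R) i j ^ 2 = ∑ i, ∑ j, A i j ^ 2 := by
  have hR' : R * Rᵀ = 1 := mul_eq_one_comm.mp hR
  have hconj : (Rᵀ * A * R)ᵀ * (Rᵀ * A * R) = Rᵀ * (Aᵀ * A) * R := by
    simp only [transpose_mul, transpose_transpose, Matrix.mul_assoc]
    rw [← Matrix.mul_assoc R Rᵀ, hR', Matrix.one_mul]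
  rw [sum_sq_eq_trace_transpose_mul_self, sum_sq_eq_trace_transpose_mul_self, hconj,
    trace_mul_cycle, hR', Matrix.one_mul]

theorem transpose_mul_conj_mul_of_orthogonal {R : Matrix n n ℝ} (hR : Rᵀ * R = 1)
    (A : Matrix n n ℝ) :
    Rᵀ * (R * A * Rᵀ) * R = A := by
  rw [← Matrix.mul_assoc, ← Matrix.mul_assoc, hR, Matrix.one_mul, Matrix.mul_assoc, hR,
    Matrix.mul_one]

theorem transpose_mul_conj_sub_mul_of_orthogonal {R : Matrix n n ℝ} (hR : Rᵀ * R = 1)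
    (A B : Matrix n n ℝ) :
    Rᵀ * (R * A * Rᵀ - B) * R = A - Rᵀ * B * R := by
  rw [Matrix.mul_sub, Matrix.sub_mul, transpose_mul_conj_mul_of_orthogonal hR]

theorem sum_sq_diagonal_sub_diagonal (a b : n → ℝ) :
    ∑ i, ∑ j, (diagonal a - diagonal b) i j ^ 2 = ∑ i, (a i - b i) ^ 2 := by
  refine Finset.sum_congr rfl fun i _ ↦ ?_
  rw [Finset.sum_eq_single i (fun j _ hji ↦ by simp [diagonal_apply_ne' _ hji]) (by simp)]
  simp

end Matrix

theorem sq_sub_max_zero_le_sq_sub {a y : ℝ} (hy : 0 ≤ y) : (a - max 0 a) ^ 2 ≤ (a - y) ^ 2 := by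
  rcases le_total 0 a with ha | ha
  · simp [max_eq_right ha, sq_nonneg]
  · rw [max_eq_left ha]
    nlinarith

theorem Matrix.PosSemidef.sum_sq_diagonal_sub_clip_le {n : Type*} [Fintype n] [DecidableEq n]
    {Y : Matrix n n ℝ} (hY : Y.PosSemidef) (l : n → ℝ) :
    ∑ i, ∑ j, (diagonal l - diagonal (fun i ↦ max 0 (l i))) i j ^ 2
      ≤ ∑ i, ∑ j, (diagonal l - Y) i j ^ 2 :=
  calc ∑ i, ∑ j, (diagonal l - diagonal (fun i ↦ max 0 (l i))) i j ^ 2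
      = ∑ i, (l i - max 0 (l i)) ^ 2 := sum_sq_diagonal_sub_diagonal _ _
    _ ≤ ∑ i, (diagonal l - Y) i i ^ 2 :=
        Finset.sum_le_sum fun i _ ↦ by
          simpa using sq_sub_max_zero_le_sq_sub (a := l i) hY.diag_nonneg
    _ ≤ ∑ i, ∑ j, (diagonal l - Y) i j ^ 2 := sum_sq_diag_le_sum_sq _

theorem psd_projection_eigen_clip_general {n : Type*} [Fintype n] [DecidableEq n]
    (P R : Matrix n n ℝ) (l : n → ℝ)
    (hR : Rᵀ * R = 1)
    (hdecomp : P = R * Matrix.diagonal l * Rᵀ) :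
    ∀ X : Matrix n n ℝ, X.IsSymm → X.PosSemidef →
      Real.sqrt (∑ i, ∑ j, ((P - R * Matrix.diagonal (fun i => max 0 (l i)) * Rᵀ) i j) ^ 2)
        ≤ Real.sqrt (∑ i, ∑ j, ((P - X) i j) ^ 2) := by
  intro X _ hX
  have hY : (Rᵀ * X * R).PosSemidef := by
    simpa using hX.conjTranspose_mul_mul_same R
  apply Real.sqrt_le_sqrt
  rw [← sum_sq_transpose_mul_mul_of_orthogonal hR,
    ← sum_sq_transpose_mul_mul_of_orthogonal hR (P - X), hdecomp,
    transpose_mul_conj_sub_mul_of_orthogonal hR, transpose_mul_conj_sub_mul_of_orthogonal hR,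
    transpose_mul_conj_mul_of_orthogonal hR]
  exact hY.sum_sq_diagonal_sub_clip_le l

theorem psd_projection_eigen_clip {n : Type*} [Fintype n] [DecidableEq n]
    (P R : Matrix n n ℝ) (l : n → ℝ)
    (hP : P.IsSymm) (hR : Rᵀ * R = 1)
    (hdecomp : P = R * Matrix.diagonal l * Rᵀ) :
    ∀ X : Matrix n n ℝ, X.IsSymm → X.PosSemidef →
      Real.sqrt (∑ i, ∑ j, ((P - R * Matrix.diagonal (fun i => max 0 (l i)) * Rᵀ) i j) ^ 2)
        ≤ Real.sqrt (∑ i, ∑ j, ((P - X) i j) ^ 2) :=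
  psd_projection_eigen_clip_general P R l hR hdecomp
end

section
/- If M := sym(XA + YC) := (XA + YC) + (XA + YC)ᵀ is negative definite for some symmetric positive definite X, then A + X⁻¹Y C is a Hurwitz matrix (all eigenvalues have negative real part). -/
/-!
Let `B = A + X⁻¹YC`, so that `XB = XA + YC` and the hypothesis says that `XB + BᵀX` is negative
definite. If `Bv = μv` with `v ≠ 0` complex, then `v*(XB + BᴴX)v = 2 Re μ · v*Xv`; the left side
has negative and `v*Xv` positive real part, because the real part of a complexified real quadratic
form at `v` is its value at `Re v` plus its value at `Im v`.
-/

open Matrix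

namespace Matrix

variable {n : Type*} [Fintype n]

lemma re_star_dotProduct_map_ofReal_mulVec (P : Matrix n n ℝ) (v : n → ℂ) :
    (star v ⬝ᵥ P.map Complex.ofReal *ᵥ v).re =
      (fun i ↦ (v i).re) ⬝ᵥ P *ᵥ (fun i ↦ (v i).re) +
        (fun i ↦ (v i).im) ⬝ᵥ P *ᵥ (fun i ↦ (v i).im) := by
  simp only [dotProduct, mulVec, Pi.star_apply, map_apply, Complex.re_sum, Finset.mul_sum,
    ← Finset.sum_add_distrib]
  refine Finset.sum_congr rfl fun i _ ↦ Finset.sum_congr rfl fun j _ ↦ ?_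
  simp only [Complex.mul_re, Complex.star_def, Complex.conj_re, Complex.conj_im,
    Complex.ofReal_re, Complex.ofReal_im, Complex.mul_im]
  ring

lemma re_star_dotProduct_map_ofReal_mulVec_pos {P : Matrix n n ℝ}
    (hP : ∀ x : n → ℝ, x ≠ 0 → 0 < x ⬝ᵥ P *ᵥ x) {v : n → ℂ} (hv : v ≠ 0) :
    0 < (star v ⬝ᵥ P.map Complex.ofReal *ᵥ v).re := by
  have hP' : ∀ x : n → ℝ, 0 ≤ x ⬝ᵥ P *ᵥ x := fun x ↦ by
    rcases eq_or_ne x 0 with rfl | hx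
    · simp
    · exact (hP x hx).le
  rw [re_star_dotProduct_map_ofReal_mulVec]
  by_cases hre : (fun i ↦ (v i).re) = 0
  · have him : (fun i ↦ (v i).im) ≠ 0 := fun him ↦
      hv <| funext fun i ↦ Complex.ext (congrFun hre i) (congrFun him i)
    linarith [hP' fun i ↦ (v i).re, hP _ him]
  · linarith [hP _ hre, hP' fun i ↦ (v i).im]

lemma star_dotProduct_mul_add_conjTranspose_mul_mulVec_of_mulVec_eq_smul {R : Type*}
    [CommRing R] [StarRing R] {B : Matrix n n R} (X : Matrix n n R) {μ : R} {v : n → R}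
    (hv : B *ᵥ v = μ • v) :
    star v ⬝ᵥ (X * B + Bᴴ * X) *ᵥ v = (μ + star μ) * (star v ⬝ᵥ X *ᵥ v) := by
  rw [add_mulVec, dotProduct_add, ← mulVec_mulVec, ← mulVec_mulVec, dotProduct_mulVec _ Bᴴ,
    ← star_mulVec, hv, star_smul, mulVec_smul, dotProduct_smul, smul_dotProduct]
  simp only [smul_eq_mul]
  ring

lemma map_ofReal_lyapunov (X B : Matrix n n ℝ) :
    (X * B + Bᵀ * X).map Complex.ofReal =
      X.map Complex.ofReal * B.map Complex.ofReal +
        (B.map Complex.ofReal)ᴴ * X.map Complex.ofReal := by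
  rw [← conjTranspose_map _ fun _ ↦ by simp, conjTranspose_eq_transpose_of_trivial,
    Matrix.map_add _ Complex.ofReal_add]
  exact congrArg₂ (· + ·) (Matrix.map_mul (f := Complex.ofRealHom))
    (Matrix.map_mul (f := Complex.ofRealHom))

variable [DecidableEq n]

lemma exists_mulVec_eq_smul_of_mem_spectrum {K : Type*} [Field K] {A : Matrix n n K} {μ : K}
    (hμ : μ ∈ spectrum K A) : ∃ v ≠ 0, A *ᵥ v = μ • v := by
  rw [← spectrum_toLin'] at hμ
  obtain ⟨v, hv⟩ := (Module.End.hasEigenvalue_iff_mem_spectrum.mpr hμ).exists_hasEigenvector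
  exact ⟨v, hv.2, by simpa using hv.apply_eq_smul⟩

theorem re_neg_of_mem_spectrum_of_lyapunov {B X : Matrix n n ℝ} (hX : X.PosDef)
    (hL : ∀ x : n → ℝ, x ≠ 0 → x ⬝ᵥ (X * B + Bᵀ * X) *ᵥ x < 0) {μ : ℂ}
    (hμ : μ ∈ spectrum ℂ (B.map Complex.ofReal)) : μ.re < 0 := by
  obtain ⟨v, hv0, hv⟩ := exists_mulVec_eq_smul_of_mem_spectrum hμ
  have hXv : 0 < (star v ⬝ᵥ X.map Complex.ofReal *ᵥ v).re :=
    re_star_dotProduct_map_ofReal_mulVec_pos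
      (fun x hx ↦ by simpa using hX.dotProduct_mulVec_pos hx) hv0
  have hLv : 0 < (star v ⬝ᵥ (-(X * B + Bᵀ * X)).map Complex.ofReal *ᵥ v).re :=
    re_star_dotProduct_map_ofReal_mulVec_pos
      (fun x hx ↦ by simpa only [neg_mulVec, dotProduct_neg, neg_pos] using hL x hx) hv0
  rw [Matrix.map_neg _ Complex.ofReal_neg, map_ofReal_lyapunov, neg_mulVec, dotProduct_neg,
    star_dotProduct_mul_add_conjTranspose_mul_mulVec_of_mulVec_eq_smul _ hv, Complex.star_def,
    Complex.add_conj, Complex.neg_re, Complex.re_ofReal_mul] at hLv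
  nlinarith

end Matrix

theorem hurwitz_of_lyapunov_lmi_general {n m : Type*} [Fintype n] [Fintype m]
    [DecidableEq n]
    (A : Matrix n n ℝ) (C : Matrix m n ℝ) (X : Matrix n n ℝ) (Y : Matrix n m ℝ)
    (hX : X.PosDef)
    (hM : ∀ x : n → ℝ, x ≠ 0 →
      x ⬝ᵥ (((X * A + Y * C) + (X * A + Y * C)ᵀ).mulVec x) < 0) :
    ∀ μ : ℂ, μ ∈ spectrum ℂ ((A + (X⁻¹ * Y) * C).map (Complex.ofReal)) → μ.re < 0 := by
  set B := A + (X⁻¹ * Y) * C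
  have hXB : X * B = X * A + Y * C := by
    rw [Matrix.mul_add, ← Matrix.mul_assoc, ← Matrix.mul_assoc,
      mul_nonsing_inv _ ((isUnit_iff_isUnit_det X).mp hX.isUnit), Matrix.one_mul]
  have hLyap : (X * A + Y * C) + (X * A + Y * C)ᵀ = X * B + Bᵀ * X := by
    rw [← hXB, transpose_mul, show Xᵀ = X from hX.isHermitian]
  exact fun μ ↦ re_neg_of_mem_spectrum_of_lyapunov hX (hLyap ▸ hM)

theorem hurwitz_of_lyapunov_lmi {n m : Type*} [Fintype n] [Fintype m]
    [DecidableEq n] [DecidableEq m]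
    (A : Matrix n n ℝ) (C : Matrix m n ℝ) (X : Matrix n n ℝ) (Y : Matrix n m ℝ)
    (hX : X.PosDef)
    (hM : ∀ x : n → ℝ, x ≠ 0 →
      x ⬝ᵥ (((X * A + Y * C) + (X * A + Y * C)ᵀ).mulVec x) < 0) :
    ∀ μ : ℂ, μ ∈ spectrum ℂ ((A + (X⁻¹ * Y) * C).map (Complex.ofReal)) → μ.re < 0 :=
  hurwitz_of_lyapunov_lmi_general A C X Y hX hM
end
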